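/- Let ξ ∈ ℂ^d with nonzero imaginary part in some coordinate, and let U(x) = Re(e^{i ξᵀ x}) for x ∈ ℝ^d. Let w(x) = (1+‖x‖²)^{−l} with l > 1/2. Then ∫_{ℝ^d} |U(x)|² w(x) dx = ∞. -/

import Mathlib

/-!
Write `ξ = b + i a` with `a, b` real and `a ≠ 0`, so that `U(x) = e^{-a·x} cos(b·x)`. The function
`G(x) = e^{-2a·x} (1 + ‖x‖²)^{-l}` is unbounded (along `-a`), and by Peetre's inequality it changes
by at most a bounded factor under translations by a bounded vector; hence it dominates arbitrarily
large multiples of the indicator of a unit ball, and `∫ G = ∞`. The zeros of the cosine are removed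
by a shift `h` with `b·h = π/2`: then `U(x)² w(x) + U(x+h)² w(x+h) ≥ c G(x)`, and the second term has
the same integral as the first by translation invariance of Lebesgue measure.
-/

open MeasureTheory Real Filter Metric
open scoped ENNReal RealInnerProductSpace

lemma one_add_norm_add_sq_le {E : Type*} [SeminormedAddCommGroup E] (x y : E) :
    1 + ‖x + y‖ ^ 2 ≤ 2 * (1 + ‖y‖ ^ 2) * (1 + ‖x‖ ^ 2) := by
  nlinarith [norm_add_le x y, norm_nonneg (x + y), sq_nonneg (‖x‖ - ‖y‖), sq_nonneg (‖x‖ * ‖y‖)]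

lemma rpow_neg_mul_le_one_add_norm_add_sq_rpow_neg {E : Type*} [SeminormedAddCommGroup E]
    {l : ℝ} (hl : 0 ≤ l) (x y : E) :
    (2 * (1 + ‖y‖ ^ 2)) ^ (-l) * (1 + ‖x‖ ^ 2) ^ (-l) ≤ (1 + ‖x + y‖ ^ 2) ^ (-l) := by
  rw [← mul_rpow (by positivity) (by positivity)]
  exact rpow_le_rpow_of_nonpos (by positivity) (one_add_norm_add_sq_le x y) (neg_nonpos.2 hl)

lemma lintegral_eq_top_of_le_add_comp_add_right {G : Type*} [MeasurableSpace G] [AddGroup G]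
    [MeasurableAdd G] {μ : Measure G} [μ.IsAddRightInvariant] {f g : G → ℝ≥0∞}
    (hf : Measurable f) (v : G) (hg : ∫⁻ x, g x ∂μ = ⊤) (hgf : ∀ x, g x ≤ f x + f (x + v)) :
    ∫⁻ x, f x ∂μ = ⊤ := by
  have : ⊤ ≤ ∫⁻ x, f x ∂μ + ∫⁻ x, f x ∂μ :=
    calc ⊤ = ∫⁻ x, g x ∂μ := hg.symm
      _ ≤ ∫⁻ x, (f x + f (x + v)) ∂μ := lintegral_mono hgf
      _ = ∫⁻ x, f x ∂μ + ∫⁻ x, f x ∂μ := by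
        rw [lintegral_add_left hf, lintegral_add_right_eq_self f v]
  simpa using top_le_iff.1 this

section HaarMeasure

variable {E : Type*} [NormedAddCommGroup E] [MeasurableSpace E] [BorelSpace E]
  (μ : Measure E) [μ.IsAddHaarMeasure]

lemma lintegral_eq_top_of_iSup_eq_top {f : E → ℝ≥0∞} {c : ℝ≥0∞} (hc : c ≠ 0)
    (hf : ∀ x y, dist y x < 1 → c * f x ≤ f y) (hsup : ⨆ x, f x = ⊤) :
    ∫⁻ y, f y ∂μ = ⊤ := by
  have hball : μ (ball 0 1) ≠ 0 := (measure_ball_pos μ 0 one_pos).ne'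
  have hle : ∀ x, c * μ (ball 0 1) * f x ≤ ∫⁻ y, f y ∂μ := fun x =>
    calc c * μ (ball 0 1) * f x = ∫⁻ _ in ball x 1, c * f x ∂μ := by
          rw [setLIntegral_const, Measure.addHaar_ball_center μ x]; ring
      _ ≤ ∫⁻ y in ball x 1, f y ∂μ := setLIntegral_mono' measurableSet_ball fun y hy => hf x y hy
      _ ≤ ∫⁻ y, f y ∂μ := setLIntegral_le_lintegral _ _
  refine top_le_iff.1 ?_
  calc ⊤ = c * μ (ball 0 1) * ⨆ x, f x := by rw [hsup, ENNReal.mul_top (mul_ne_zero hc hball)]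
    _ ≤ ∫⁻ y, f y ∂μ := by rw [ENNReal.mul_iSup]; exact iSup_le hle

end HaarMeasure

section InnerProductSpace

variable {E : Type*} [NormedAddCommGroup E] [InnerProductSpace ℝ E]

noncomputable def expWeight (a : E) (l : ℝ) (x : E) : ℝ := exp ⟪a, x⟫ * (1 + ‖x‖ ^ 2) ^ (-l)

lemma expWeight_nonneg (a : E) (l : ℝ) (x : E) : 0 ≤ expWeight a l x := by
  unfold expWeight; positivity

lemma mul_expWeight_le_expWeight_add {a x y : E} {l r : ℝ} (hl : 0 ≤ l) (hy : ‖y‖ ≤ r) :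
    exp (-(‖a‖ * r)) * (2 * (1 + r ^ 2)) ^ (-l) * expWeight a l x ≤ expWeight a l (x + y) := by
  have hexp : exp (-(‖a‖ * r)) * exp ⟪a, x⟫ ≤ exp ⟪a, x + y⟫ := by
    rw [← exp_add, inner_add_right, add_comm]
    gcongr
    nlinarith [neg_abs_le ⟪a, y⟫, abs_real_inner_le_norm a y, norm_nonneg a]
  have hweight : (2 * (1 + r ^ 2)) ^ (-l) * (1 + ‖x‖ ^ 2) ^ (-l) ≤ (1 + ‖x + y‖ ^ 2) ^ (-l) := by
    refine le_trans (mul_le_mul_of_nonneg_right ?_ (by positivity))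
      (rpow_neg_mul_le_one_add_norm_add_sq_rpow_neg hl x y)
    exact rpow_le_rpow_of_nonpos (by positivity) (by gcongr) (neg_nonpos.2 hl)
  calc exp (-(‖a‖ * r)) * (2 * (1 + r ^ 2)) ^ (-l) * expWeight a l x
      = (exp (-(‖a‖ * r)) * exp ⟪a, x⟫) * ((2 * (1 + r ^ 2)) ^ (-l) * (1 + ‖x‖ ^ 2) ^ (-l)) := by
        unfold expWeight; ring
    _ ≤ expWeight a l (x + y) := mul_le_mul hexp hweight (by positivity) (by positivity)

lemma tendsto_expWeight_smul_atTop {a : E} {l : ℝ} (ha : a ≠ 0) (hl : 0 ≤ l) :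
    Tendsto (fun t : ℝ => expWeight a l (t • a)) atTop atTop := by
  refine tendsto_atTop_mono' atTop ?_ ((tendsto_exp_mul_div_rpow_atTop (2 * l) (‖a‖ ^ 2)
    (by positivity)).const_mul_atTop (by positivity : 0 < (1 + ‖a‖ ^ 2) ^ (-l)))
  filter_upwards [eventually_ge_atTop 1] with t ht
  have hnorm : ‖t • a‖ ^ 2 = t ^ 2 * ‖a‖ ^ 2 := by rw [norm_smul, mul_pow, norm_eq_abs, sq_abs]
  calc (1 + ‖a‖ ^ 2) ^ (-l) * (exp (‖a‖ ^ 2 * t) / t ^ (2 * l))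
      = exp ⟪a, t • a⟫ * ((1 + ‖a‖ ^ 2) * t ^ 2) ^ (-l) := by
        rw [inner_smul_right, real_inner_self_eq_norm_sq, mul_rpow (by positivity) (by positivity),
          rpow_neg (sq_nonneg t), rpow_mul (by linarith), rpow_two, mul_comm t]
        ring
    _ ≤ expWeight a l (t • a) := by
        refine mul_le_mul_of_nonneg_left ?_ (exp_pos _).le
        exact rpow_le_rpow_of_nonpos (by positivity) (by nlinarith) (neg_nonpos.2 hl)

lemma lintegral_expWeight_eq_top [MeasurableSpace E] [BorelSpace E] (μ : Measure E)
    [μ.IsAddHaarMeasure] {a : E} {l : ℝ} (ha : a ≠ 0) (hl : 0 ≤ l) :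
    ∫⁻ x, ENNReal.ofReal (expWeight a l x) ∂μ = ⊤ := by
  refine lintegral_eq_top_of_iSup_eq_top μ
    (c := ENNReal.ofReal (exp (-(‖a‖ * 1)) * (2 * (1 + 1 ^ 2)) ^ (-l)))
    (ENNReal.ofReal_pos.2 (by positivity)).ne' (fun x y hxy => ?_) (iSup_eq_top.2 fun b hb => ?_)
  · rw [← ENNReal.ofReal_mul (by positivity)]
    refine ENNReal.ofReal_le_ofReal ?_
    simpa using mul_expWeight_le_expWeight_add (a := a) (x := x) (y := y - x) (r := 1) hl
      (by rw [← dist_eq_norm]; exact hxy.le)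
  · obtain ⟨t, ht⟩ := ((tendsto_expWeight_smul_atTop ha hl).eventually_gt_atTop b.toReal).exists
    exact ⟨t • a, (ENNReal.lt_ofReal_iff_toReal_lt hb.ne).2 ht⟩

lemma exists_forall_one_le_cos_sq_add_cos_sq (b : E) :
    ∃ h : E, ∀ x, 1 ≤ cos ⟪b, x⟫ ^ 2 + cos ⟪b, x + h⟫ ^ 2 := by
  rcases eq_or_ne b 0 with rfl | hb
  · exact ⟨0, fun x => by norm_num⟩
  · refine ⟨(π / 2 / ‖b‖ ^ 2) • b, fun x => ?_⟩
    have hbh : ⟪b, (π / 2 / ‖b‖ ^ 2) • b⟫ = π / 2 := by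
      rw [inner_smul_right, real_inner_self_eq_norm_sq]
      field_simp [norm_ne_zero_iff.2 hb]
    rw [inner_add_right, hbh, cos_add_pi_div_two, neg_sq, add_comm, sin_sq_add_cos_sq]

theorem lintegral_exp_inner_mul_cos_inner_sq_mul_rpow_eq_top [MeasurableSpace E] [BorelSpace E]
    (μ : Measure E) [μ.IsAddHaarMeasure] {a : E} (ha : a ≠ 0) (b : E) {l : ℝ} (hl : 0 ≤ l) :
    ∫⁻ x, ENNReal.ofReal ((exp ⟪a, x⟫ * cos ⟪b, x⟫) ^ 2 * (1 + ‖x‖ ^ 2) ^ (-l)) ∂μ = ⊤ := by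
  obtain ⟨h, hcos⟩ := exists_forall_one_le_cos_sq_add_cos_sq b
  set G := expWeight ((2 : ℝ) • a) l
  have hF : ∀ x, (exp ⟪a, x⟫ * cos ⟪b, x⟫) ^ 2 * (1 + ‖x‖ ^ 2) ^ (-l) = cos ⟪b, x⟫ ^ 2 * G x := by
    intro x
    rw [mul_pow, ← exp_nat_mul]
    simp only [G, expWeight, real_inner_smul_left]
    push_cast
    ring
  have hG : ∀ x, 0 ≤ G x := expWeight_nonneg _ l
  set c := min 1 (exp (-(‖(2 : ℝ) • a‖ * ‖h‖)) * (2 * (1 + ‖h‖ ^ 2)) ^ (-l))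
  have hc : 0 < c := lt_min one_pos (by positivity)
  refine lintegral_eq_top_of_le_add_comp_add_right (by fun_prop) h
    (g := fun x => ENNReal.ofReal c * ENNReal.ofReal (G x)) ?_ fun x => ?_
  · rw [lintegral_const_mul' _ _ ENNReal.ofReal_ne_top,
      lintegral_expWeight_eq_top μ (smul_ne_zero two_ne_zero ha) hl,
      ENNReal.mul_top (ENNReal.ofReal_pos.2 hc).ne']
  · have hshift : c * G x ≤ G (x + h) :=
      (mul_le_mul_of_nonneg_right (min_le_right _ _) (hG x)).trans
        (mul_expWeight_le_expWeight_add hl le_rfl)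
    rw [← ENNReal.ofReal_mul hc.le, hF, hF, ← ENNReal.ofReal_add (mul_nonneg (sq_nonneg _) (hG _))
      (mul_nonneg (sq_nonneg _) (hG _))]
    refine ENNReal.ofReal_le_ofReal ?_
    calc c * G x ≤ (cos ⟪b, x⟫ ^ 2 + cos ⟪b, x + h⟫ ^ 2) * (c * G x) :=
          le_mul_of_one_le_left (mul_nonneg hc.le (hG x)) (hcos x)
      _ ≤ cos ⟪b, x⟫ ^ 2 * G x + cos ⟪b, x + h⟫ ^ 2 * G (x + h) := by
          rw [add_mul]
          gcongr
          exact mul_le_of_le_one_left (hG x) (min_le_left _ _)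

end InnerProductSpace

theorem stmt_7 (d : ℕ) (ξ : Fin d → ℂ) (hξ : ∃ j, (ξ j).im ≠ 0)
    (l : ℝ) (hl : 1 / 2 < l)
    (U : EuclideanSpace ℝ (Fin d) → ℝ)
    (hU : ∀ x, U x = (Complex.exp (Complex.I * ∑ j, ξ j * (x j : ℂ))).re)
    (w : EuclideanSpace ℝ (Fin d) → ℝ)
    (hw : ∀ x, w x = (1 + ‖x‖ ^ 2) ^ (-l)) :
    ∫⁻ x, ENNReal.ofReal (U x ^ 2 * w x) = ⊤ := by
  obtain ⟨j, hj⟩ := hξ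
  let a : EuclideanSpace ℝ (Fin d) := WithLp.toLp 2 fun j => -(ξ j).im
  let b : EuclideanSpace ℝ (Fin d) := WithLp.toLp 2 fun j => (ξ j).re
  have ha : a ≠ 0 := fun h => hj (by simpa [a] using congrArg (· j) h)
  have hUw : ∀ x, U x ^ 2 * w x = (exp ⟪a, x⟫ * cos ⟪b, x⟫) ^ 2 * (1 + ‖x‖ ^ 2) ^ (-l) := by
    intro x
    rw [hU, hw, Complex.exp_re]
    simp [a, b, PiLp.inner_apply, Complex.re_sum, Complex.im_sum, mul_comm]
  simp_rw [hUw]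
  exact lintegral_exp_inner_mul_cos_inner_sq_mul_rpow_eq_top volume ha b (by linarith)
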